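/- arXiv:1203.1432 — 4 statements merged into one kernel-verified Lean document; each statement's English description precedes it below -/
import Mathlib

section
/- A metric space (X,d) is a Busemann space if and only if there exists a (unique) convexity mapping W such that (X,d,W) is a uniquely geodesic W-hyperbolic space. -/
open Metric Set

/-- A geodesic segment in a metric space joining `x` and `y`: the image of an
isometric embedding of a real interval sending the endpoints to `x` and `y`. -/
def IsGeodesicSegment {X : Type*} [MetricSpace X] (S : Set X) (x y : X) : Prop :=
  ∃ (a b : ℝ) (γ : ℝ → X), a ≤ b ∧ γ a = x ∧ γ b = y ∧
    (∀ s ∈ Set.Icc a b, ∀ t ∈ Set.Icc a b, dist (γ s) (γ t) = |s - t|) ∧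
    S = γ '' Set.Icc a b

/-- A metric space is geodesic if every two points are joined by a geodesic segment. -/
def GeodesicSpace (X : Type*) [MetricSpace X] : Prop :=
  ∀ x y : X, ∃ S : Set X, IsGeodesicSegment S x y

/-- `(X,d,W)` is a W-hyperbolic space: the convexity mapping `W` satisfies
axioms (W1)-(W4) for all parameters in `[0,1]`. -/
def IsWHyperbolic {X : Type*} [MetricSpace X] (W : X → X → ℝ → X) : Prop :=
  (∀ x y z : X, ∀ l ∈ Set.Icc (0:ℝ) 1,
      dist z (W x y l) ≤ (1 - l) * dist z x + l * dist z y) ∧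
  (∀ x y : X, ∀ l ∈ Set.Icc (0:ℝ) 1, ∀ l' ∈ Set.Icc (0:ℝ) 1,
      dist (W x y l) (W x y l') = |l - l'| * dist x y) ∧
  (∀ x y : X, ∀ l ∈ Set.Icc (0:ℝ) 1, W x y l = W y x (1 - l)) ∧
  (∀ x y z w : X, ∀ l ∈ Set.Icc (0:ℝ) 1,
      dist (W x z l) (W y w l) ≤ (1 - l) * dist x y + l * dist z w)

/-- An affinely reparametrized geodesic on `[a,b]`: a constant path or a geodesic
precomposed with an affine homeomorphism, i.e. `d(γ s, γ t) = c|s-t|` for some `c ≥ 0`. -/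
def AffinelyReparamGeodesic {X : Type*} [MetricSpace X] (γ : ℝ → X) (a b : ℝ) : Prop :=
  ∃ c : ℝ, 0 ≤ c ∧ ∀ s ∈ Set.Icc a b, ∀ t ∈ Set.Icc a b, dist (γ s) (γ t) = c * |s - t|

/-- A Busemann space: a geodesic space in which the distance between any two
affinely reparametrized geodesics is a convex function. -/
def IsBusemann (X : Type*) [MetricSpace X] : Prop :=
  GeodesicSpace X ∧
  ∀ (γ γ' : ℝ → X) (a b c d : ℝ), AffinelyReparamGeodesic γ a b →
    AffinelyReparamGeodesic γ' c d →
    ConvexOn ℝ (Set.Icc a b ×ˢ Set.Icc c d) (fun p : ℝ × ℝ => dist (γ p.1) (γ' p.2))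

/-!
In a Busemann space the distance between two geodesics `[0,1] → X` with the same endpoints is
convex and vanishes at both ends, so they coincide: segments are unique, and `W x y λ`, the point
at fraction `λ` of the segment, is well defined. (W1), (W2), (W4) are Busemann convexity on the
diagonal (against a constant path for (W1)), and (W3) is uniqueness applied to the reversed
segment.

Conversely, if segments are unique then every affinely reparametrized geodesic is `W x y`
precomposed with an affine map, and uniqueness also gives
`W (W x y l₁) (W x y l₂) λ = W x y ((1 - λ) l₁ + λ l₂)`. With this identity (W4) says that
`(l, m) ↦ d(W x y l, W z w m)` is convex on `[0,1]²`, and Busemann convexity follows by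
composing with affine maps.
-/

section UnitGeodesic

variable {X : Type*} [MetricSpace X]

structure IsUnitGeodesic (δ : ℝ → X) (x y : X) : Prop where
  apply_zero : δ 0 = x
  apply_one : δ 1 = y
  dist_eq : ∀ s ∈ Icc (0:ℝ) 1, ∀ t ∈ Icc (0:ℝ) 1, dist (δ s) (δ t) = dist x y * |s - t|

lemma isUnitGeodesic_comp_lineMap {γ : ℝ → X} {c : ℝ} {I : Set ℝ} (hI : Convex ℝ I)
    (hγ : ∀ s ∈ I, ∀ t ∈ I, dist (γ s) (γ t) = c * |s - t|) {a b : ℝ} (ha : a ∈ I) (hb : b ∈ I) :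
    IsUnitGeodesic (γ ∘ AffineMap.lineMap a b) (γ a) (γ b) := by
  refine ⟨by simp, by simp, fun s hs t ht => ?_⟩
  rw [Function.comp_apply, Function.comp_apply, hγ _ (hI.lineMap_mem ha hb hs) _
    (hI.lineMap_mem ha hb ht), hγ _ ha _ hb, ← Real.dist_eq, dist_lineMap_lineMap, Real.dist_eq,
    Real.dist_eq, abs_sub_comm a b]
  ring

namespace IsUnitGeodesic

variable {δ δ₁ δ₂ : ℝ → X} {x y : X}

lemma affinelyReparamGeodesic (h : IsUnitGeodesic δ x y) : AffinelyReparamGeodesic δ 0 1 :=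
  ⟨dist x y, dist_nonneg, h.dist_eq⟩

lemma dist_left_apply (h : IsUnitGeodesic δ x y) {t : ℝ} (ht : t ∈ Icc (0:ℝ) 1) :
    dist x (δ t) = dist x y * t := by
  have := h.dist_eq 0 (left_mem_Icc.2 zero_le_one) t ht
  rwa [h.apply_zero, zero_sub, abs_neg, abs_of_nonneg ht.1] at this

lemma symm (h : IsUnitGeodesic δ x y) : IsUnitGeodesic (fun t => δ (1 - t)) y x := by
  refine ⟨by simp [h.apply_one], by simp [h.apply_zero], fun s hs t ht => ?_⟩
  have hs' : 1 - s ∈ Icc (0:ℝ) 1 := ⟨by linarith [hs.2], by linarith [hs.1]⟩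
  have ht' : 1 - t ∈ Icc (0:ℝ) 1 := ⟨by linarith [ht.2], by linarith [ht.1]⟩
  rw [h.dist_eq _ hs' _ ht', dist_comm, abs_sub_comm, sub_sub_sub_cancel_left]

lemma isGeodesicSegment (h : IsUnitGeodesic δ x y) (hxy : x ≠ y) :
    IsGeodesicSegment (δ '' Icc 0 1) x y := by
  have hd : 0 < dist x y := dist_pos.2 hxy
  have hmem : ∀ s ∈ Icc (0:ℝ) (dist x y), s / dist x y ∈ Icc (0:ℝ) 1 :=
    fun s hs => ⟨div_nonneg hs.1 hd.le, div_le_one_of_le₀ hs.2 hd.le⟩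
  refine ⟨0, dist x y, fun t => δ (t / dist x y), hd.le, by simp [h.apply_zero],
    by simp [hd.ne', h.apply_one], fun s hs t ht => ?_, ?_⟩
  · rw [h.dist_eq _ (hmem s hs) _ (hmem t ht), div_sub_div_same, abs_div, abs_of_pos hd,
      mul_div_cancel₀ _ hd.ne']
  · rw [← image_image δ (· / dist x y)]
    congr 1
    simp [div_eq_mul_inv, image_mul_right_Icc' _ _ (inv_pos.2 hd), hd.ne']

/-- Both trace the unique segment, and `t` is recovered from `δ t` as
`dist x (δ t) / dist x y`. -/
lemma eqOn_of_existsUnique (huniq : ∀ x y : X, x ≠ y → ∃! S : Set X, IsGeodesicSegment S x y)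
    (h₁ : IsUnitGeodesic δ₁ x y) (h₂ : IsUnitGeodesic δ₂ x y) : EqOn δ₁ δ₂ (Icc 0 1) := by
  intro u hu
  obtain rfl | hxy := eq_or_ne x y
  · have h₁u := h₁.dist_left_apply hu
    have h₂u := h₂.dist_left_apply hu
    rw [dist_self, zero_mul, dist_eq_zero] at h₁u h₂u
    rw [← h₁u, ← h₂u]
  obtain ⟨S, -, hS⟩ := huniq x y hxy
  have himage : δ₁ '' Icc 0 1 = δ₂ '' Icc 0 1 :=
    (hS _ (h₁.isGeodesicSegment hxy)).trans (hS _ (h₂.isGeodesicSegment hxy)).symm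
  obtain ⟨v, hv, hvu⟩ : δ₁ u ∈ δ₂ '' Icc 0 1 := himage ▸ mem_image_of_mem δ₁ hu
  have hdist : dist x y * v = dist x y * u := by
    rw [← h₁.dist_left_apply hu, ← h₂.dist_left_apply hv, hvu]
  rw [← hvu, mul_left_cancel₀ (dist_pos.2 hxy).ne' hdist]

end IsUnitGeodesic

lemma IsGeodesicSegment.exists_isUnitGeodesic {S : Set X} {x y : X}
    (hS : IsGeodesicSegment S x y) : ∃ δ : ℝ → X, IsUnitGeodesic δ x y ∧ S = δ '' Icc 0 1 := by
  obtain ⟨a, b, γ, hab, rfl, rfl, hγ, rfl⟩ := hS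
  refine ⟨_, isUnitGeodesic_comp_lineMap (convex_Icc a b) (c := 1) (by simpa using hγ)
    (left_mem_Icc.2 hab) (right_mem_Icc.2 hab), ?_⟩
  rw [image_comp, ← segment_eq_image_lineMap, segment_eq_Icc hab]

lemma isGeodesicSegment_singleton (x : X) : IsGeodesicSegment {x} x x :=
  ⟨0, 0, fun _ => x, le_rfl, rfl, rfl, fun s hs t ht => by
    rw [Icc_self, mem_singleton_iff] at hs ht; simp [hs, ht], by simp⟩

end UnitGeodesic

section Busemann

variable {X : Type*} [MetricSpace X]

namespace IsBusemann

variable {δ₁ δ₂ : ℝ → X} {x y : X}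

lemma dist_apply_le (hB : IsBusemann X) {γ γ' : ℝ → X} (hγ : AffinelyReparamGeodesic γ 0 1)
    (hγ' : AffinelyReparamGeodesic γ' 0 1) {l : ℝ} (hl : l ∈ Icc (0:ℝ) 1) :
    dist (γ l) (γ' l) ≤ (1 - l) * dist (γ 0) (γ' 0) + l * dist (γ 1) (γ' 1) := by
  have h₀ : ((0:ℝ), (0:ℝ)) ∈ Icc (0:ℝ) 1 ×ˢ Icc (0:ℝ) 1 := by simp
  have h₁ : ((1:ℝ), (1:ℝ)) ∈ Icc (0:ℝ) 1 ×ˢ Icc (0:ℝ) 1 := by simp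
  simpa using (hB.2 γ γ' 0 1 0 1 hγ hγ').2 h₀ h₁ (sub_nonneg.2 hl.2) hl.1 (sub_add_cancel 1 l)

lemma exists_isUnitGeodesic (hB : IsBusemann X) (x y : X) : ∃ δ : ℝ → X, IsUnitGeodesic δ x y :=
  let ⟨_, hS⟩ := hB.1 x y
  let ⟨δ, hδ, _⟩ := hS.exists_isUnitGeodesic
  ⟨δ, hδ⟩

lemma isUnitGeodesic_eqOn (hB : IsBusemann X) (h₁ : IsUnitGeodesic δ₁ x y)
    (h₂ : IsUnitGeodesic δ₂ x y) : EqOn δ₁ δ₂ (Icc 0 1) := by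
  intro l hl
  have := hB.dist_apply_le h₁.affinelyReparamGeodesic h₂.affinelyReparamGeodesic hl
  rw [h₁.apply_zero, h₂.apply_zero, h₁.apply_one, h₂.apply_one] at this
  simpa using this

lemma isWHyperbolic (hB : IsBusemann X) {W : X → X → ℝ → X}
    (hW : ∀ x y, IsUnitGeodesic (W x y) x y) : IsWHyperbolic W := by
  refine ⟨fun x y z l hl => ?_, fun x y l hl l' hl' => ?_, fun x y l hl => ?_,
    fun x y z w l hl => ?_⟩
  · have hz : AffinelyReparamGeodesic (fun _ => z) 0 1 := ⟨0, le_rfl, by simp⟩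
    have := hB.dist_apply_le (hW x y).affinelyReparamGeodesic hz hl
    rwa [(hW x y).apply_zero, (hW x y).apply_one, dist_comm, dist_comm x, dist_comm y] at this
  · exact ((hW x y).dist_eq l hl l' hl').trans (mul_comm _ _)
  · exact hB.isUnitGeodesic_eqOn (hW x y) (hW y x).symm hl
  · have := hB.dist_apply_le (hW x z).affinelyReparamGeodesic (hW y w).affinelyReparamGeodesic hl
    rwa [(hW x z).apply_zero, (hW x z).apply_one, (hW y w).apply_zero, (hW y w).apply_one] at this

lemma existsUnique_isGeodesicSegment (hB : IsBusemann X) (hxy : x ≠ y) :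
    ∃! S : Set X, IsGeodesicSegment S x y := by
  obtain ⟨δ, hδ⟩ := hB.exists_isUnitGeodesic x y
  refine ⟨_, hδ.isGeodesicSegment hxy, fun S hS => ?_⟩
  obtain ⟨δ', hδ', rfl⟩ := hS.exists_isUnitGeodesic
  exact (hB.isUnitGeodesic_eqOn hδ' hδ).image_eq

end IsBusemann

end Busemann

/-- Constant `0` when `a = b`, as `(0 : ℝ)⁻¹ = 0`. -/
noncomputable def unitRescale (a b : ℝ) : ℝ →ᵃ[ℝ] ℝ :=
  (b - a)⁻¹ • (AffineMap.id ℝ ℝ - AffineMap.const ℝ ℝ a)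

@[simp]
lemma unitRescale_apply (a b s : ℝ) : unitRescale a b s = (s - a) / (b - a) := by
  simp [unitRescale, div_eq_inv_mul]

lemma unitRescale_mapsTo (a b : ℝ) : MapsTo (unitRescale a b) (Icc a b) (Icc 0 1) := by
  intro s hs
  rw [unitRescale_apply]
  have hab : 0 ≤ b - a := sub_nonneg.2 (hs.1.trans hs.2)
  exact ⟨div_nonneg (sub_nonneg.2 hs.1) hab, div_le_one_of_le₀ (sub_le_sub_right hs.2 a) hab⟩

lemma lineMap_unitRescale {a b s : ℝ} (hs : s ∈ Icc a b) :
    AffineMap.lineMap a b (unitRescale a b s) = s := by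
  rcases (hs.1.trans hs.2).eq_or_lt with rfl | hab
  · simp [le_antisymm hs.2 hs.1]
  · rw [unitRescale_apply, AffineMap.lineMap_apply_ring', div_mul_cancel₀ _ (sub_pos.2 hab).ne',
      sub_add_cancel]

section WHyperbolic

variable {X : Type*} [MetricSpace X]

namespace IsWHyperbolic

variable {W : X → X → ℝ → X}

lemma apply_zero (hW : IsWHyperbolic W) (x y : X) : W x y 0 = x := by
  simpa [eq_comm] using hW.1 x y x 0 (left_mem_Icc.2 zero_le_one)

lemma apply_one (hW : IsWHyperbolic W) (x y : X) : W x y 1 = y := by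
  simpa [eq_comm] using hW.1 x y y 1 (right_mem_Icc.2 zero_le_one)

lemma isUnitGeodesic (hW : IsWHyperbolic W) (x y : X) : IsUnitGeodesic (W x y) x y :=
  ⟨hW.apply_zero x y, hW.apply_one x y,
    fun s hs t ht => (hW.2.1 x y s hs t ht).trans (mul_comm _ _)⟩

lemma geodesicSpace (hW : IsWHyperbolic W) : GeodesicSpace X := by
  intro x y
  obtain rfl | hxy := eq_or_ne x y
  · exact ⟨_, isGeodesicSegment_singleton x⟩
  · exact ⟨_, (hW.isUnitGeodesic x y).isGeodesicSegment hxy⟩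

lemma apply_apply_eq (hW : IsWHyperbolic W)
    (huniq : ∀ x y : X, x ≠ y → ∃! S : Set X, IsGeodesicSegment S x y) (x y : X)
    {l₁ l₂ u : ℝ} (hl₁ : l₁ ∈ Icc (0:ℝ) 1) (hl₂ : l₂ ∈ Icc (0:ℝ) 1) (hu : u ∈ Icc (0:ℝ) 1) :
    W (W x y l₁) (W x y l₂) u = W x y (AffineMap.lineMap l₁ l₂ u) :=
  (hW.isUnitGeodesic _ _).eqOn_of_existsUnique huniq
    (isUnitGeodesic_comp_lineMap (convex_Icc 0 1) (hW.isUnitGeodesic x y).dist_eq hl₁ hl₂) hu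

lemma convexOn_dist (hW : IsWHyperbolic W)
    (huniq : ∀ x y : X, x ≠ y → ∃! S : Set X, IsGeodesicSegment S x y) (x y z w : X) :
    ConvexOn ℝ (Icc 0 1 ×ˢ Icc 0 1) (fun p : ℝ × ℝ => dist (W x y p.1) (W z w p.2)) := by
  refine ⟨(convex_Icc 0 1).prod (convex_Icc 0 1), ?_⟩
  rintro ⟨l₁, m₁⟩ ⟨hl₁, hm₁⟩ ⟨l₂, m₂⟩ ⟨hl₂, hm₂⟩ μ ν hμ hν hμν
  obtain rfl : μ = 1 - ν := by linarith
  have hν : ν ∈ Icc (0:ℝ) 1 := ⟨hν, by linarith⟩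
  have key := hW.2.2.2 (W x y l₁) (W z w m₁) (W x y l₂) (W z w m₂) ν hν
  rw [hW.apply_apply_eq huniq x y hl₁ hl₂ hν, hW.apply_apply_eq huniq z w hm₁ hm₂ hν] at key
  simpa [AffineMap.lineMap_apply_ring] using key

lemma eqOn_of_affinelyReparamGeodesic (hW : IsWHyperbolic W)
    (huniq : ∀ x y : X, x ≠ y → ∃! S : Set X, IsGeodesicSegment S x y) {γ : ℝ → X} {a b : ℝ}
    (hγ : AffinelyReparamGeodesic γ a b) : EqOn γ (W (γ a) (γ b) ∘ unitRescale a b) (Icc a b) := by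
  intro s hs
  have hab : a ≤ b := hs.1.trans hs.2
  obtain ⟨c, -, hc⟩ := hγ
  have hδ := isUnitGeodesic_comp_lineMap (convex_Icc a b) hc (left_mem_Icc.2 hab)
    (right_mem_Icc.2 hab)
  have := hδ.eqOn_of_existsUnique huniq (hW.isUnitGeodesic _ _) (unitRescale_mapsTo a b hs)
  rwa [Function.comp_apply, lineMap_unitRescale hs] at this

lemma isBusemann (hW : IsWHyperbolic W)
    (huniq : ∀ x y : X, x ≠ y → ∃! S : Set X, IsGeodesicSegment S x y) : IsBusemann X := by
  refine ⟨hW.geodesicSpace, fun γ γ' a b c d hγ hγ' => ?_⟩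
  have hF := (hW.convexOn_dist huniq (γ a) (γ b) (γ' c) (γ' d)).comp_affineMap
    ((unitRescale a b).prodMap (unitRescale c d))
  refine (hF.subset ?_ ((convex_Icc a b).prod (convex_Icc c d))).congr ?_
  · exact (unitRescale_mapsTo a b).prodMap (unitRescale_mapsTo c d)
  · rintro ⟨s, t⟩ ⟨hs, ht⟩
    simp only [Function.comp_apply, AffineMap.coe_prodMap, Prod.map_fst, Prod.map_snd]
    exact congrArg₂ dist (hW.eqOn_of_affinelyReparamGeodesic huniq hγ hs).symm
      (hW.eqOn_of_affinelyReparamGeodesic huniq hγ' ht).symm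

end IsWHyperbolic

end WHyperbolic

theorem stmt8 {X : Type*} [MetricSpace X] :
    IsBusemann X ↔
    ∃ W : X → X → ℝ → X, IsWHyperbolic W ∧
      ∀ x y : X, x ≠ y → ∃! S : Set X, IsGeodesicSegment S x y := by
  constructor
  · intro hB
    choose W hW using hB.exists_isUnitGeodesic
    exact ⟨W, hB.isWHyperbolic hW, fun x y => hB.existsUnique_isGeodesicSegment⟩
  · rintro ⟨W, hW, huniq⟩
    exact hW.isBusemann huniq
end

section
/- Let C be a nonempty closed convex subset of a CAT(0) space X. The metric projection P_C: X → C onto C is firmly nonexpansive: for all x, y ∈ X and λ ∈ (0,1), d(P_C x, P_C y) ≤ d((1-λ)x ⊕ λP_C x, (1-λ)y ⊕ λP_C y). -/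
open Metric Set

/-- A CAT(0) structure: a W-hyperbolic space satisfying the CN⁻ inequality. -/
def IsCAT0 {X : Type*} [MetricSpace X] (W : X → X → ℝ → X) : Prop :=
  IsWHyperbolic W ∧
  ∀ x y z : X, dist z (W x y (1/2)) ^ 2 ≤
    (1/2) * dist z x ^ 2 + (1/2) * dist z y ^ 2 - (1/4) * dist x y ^ 2

/-- A subset is convex if it contains the segments `[x,y]_W` of its points. -/
def IsWConvex {X : Type*} [MetricSpace X] (W : X → X → ℝ → X) (C : Set X) : Prop :=
  ∀ x ∈ C, ∀ y ∈ C, ∀ l ∈ Set.Icc (0:ℝ) 1, W x y l ∈ C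

section Aux
variable {X : Type*} [MetricSpace X] {W : X → X → ℝ → X}

private lemma W_zero (hX : IsWHyperbolic W) (x y : X) : W x y 0 = x := by
  have h := hX.1 x y x 0 ⟨le_refl 0, zero_le_one⟩
  simp at h
  exact h.symm

private lemma W_one (hX : IsWHyperbolic W) (x y : X) : W x y 1 = y := by
  have h := hX.1 x y y 1 ⟨zero_le_one, le_refl 1⟩
  simp at h
  exact h.symm

private lemma dist_W_left (hX : IsWHyperbolic W) (x y : X) {l : ℝ}
    (hl : l ∈ Set.Icc (0:ℝ) 1) : dist x (W x y l) = l * dist x y := by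
  have h := hX.2.1 x y 0 ⟨le_refl 0, zero_le_one⟩ l hl
  rw [W_zero hX] at h
  rwa [abs_of_nonpos (by linarith [hl.1]), neg_sub, sub_zero] at h

private lemma dist_W_right (hX : IsWHyperbolic W) (x y : X) {l : ℝ}
    (hl : l ∈ Set.Icc (0:ℝ) 1) : dist y (W x y l) = (1 - l) * dist x y := by
  have h := hX.2.1 x y 1 ⟨zero_le_one, le_refl 1⟩ l hl
  rw [W_one hX] at h
  rwa [abs_of_nonneg (by linarith [hl.2])] at h

/-- Strong projection characterization: if `p ∈ C` is a nearest point of `u` in `C`,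
then for every `z ∈ C`, `d(u,p)² + d(p,z)² ≤ d(u,z)²`. -/
private lemma proj_char (hX : IsCAT0 W) {C : Set X} (hconv : IsWConvex W C)
    {u p : X} (hpC : p ∈ C) (hmin : ∀ z ∈ C, dist u p ≤ dist u z)
    {z : X} (hz : z ∈ C) :
    dist u p ^ 2 + dist p z ^ 2 ≤ dist u z ^ 2 := by
  have hhalf : (1/2 : ℝ) ∈ Set.Icc (0:ℝ) 1 := by norm_num
  set s : ℕ → X := fun n => Nat.rec z (fun _ w => W p w (1/2)) n with hs
  have hs0 : s 0 = z := rfl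
  have hsucc : ∀ n, s (n+1) = W p (s n) (1/2) := fun n => rfl
  have hsC : ∀ n, s n ∈ C := by
    intro n
    induction n with
    | zero => exact hz
    | succ n ih => exact hconv p hpC (s n) ih (1/2) hhalf
  have hdist : ∀ n, dist p (s n) = (1/2)^n * dist p z := by
    intro n
    induction n with
    | zero => simp [hs0]
    | succ n ih =>
      rw [hsucc n, dist_W_left hX.1 p (s n) hhalf, ih]
      ring
  have hb : ∀ n, 0 ≤ dist u (s n) ^ 2 - dist u p ^ 2 := by
    intro n
    have h1 := hmin (s n) (hsC n)
    nlinarith [dist_nonneg (x := u) (y := p)]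
  have hrec : ∀ n, 2 * (dist u (s (n+1)) ^ 2 - dist u p ^ 2) + (1/2) * ((1/4)^n * dist p z ^ 2)
      ≤ dist u (s n) ^ 2 - dist u p ^ 2 := by
    intro n
    have hCN := hX.2 p (s n) u
    have h4 : dist p (s n) ^ 2 = (1/4)^n * dist p z ^ 2 := by
      rw [hdist n, mul_pow, ← pow_mul, mul_comm n 2, pow_mul]
      norm_num
    rw [h4] at hCN
    rw [hsucc n]
    linarith
  have key : ∀ n : ℕ, (1 - (1/2)^n) * dist p z ^ 2 ≤ dist u z ^ 2 - dist u p ^ 2 := by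
    intro n
    have main : ∀ n : ℕ, (1 - (1/2)^n) * dist p z ^ 2 + 2^n * (dist u (s n) ^ 2 - dist u p ^ 2)
        ≤ dist u (s 0) ^ 2 - dist u p ^ 2 := by
      intro n
      induction n with
      | zero => simp
      | succ n ih =>
        have h5 := hrec n
        have h6 : (0:ℝ) < 2^n := by positivity
        have h5' := mul_le_mul_of_nonneg_left h5 h6.le
        have h11 : (2:ℝ)^n * ((1/4)^n * dist p z ^ 2) = (1/2)^n * dist p z ^ 2 := by
          rw [← mul_assoc, ← mul_pow]
          norm_num
        calc (1 - (1/2)^(n+1)) * dist p z ^ 2 + 2^(n+1) * (dist u (s (n+1)) ^ 2 - dist u p ^ 2)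
            ≤ (1 - (1/2)^n) * dist p z ^ 2 + 2^n * (dist u (s n) ^ 2 - dist u p ^ 2) := by
              have h7 : (1/2:ℝ)^(n+1) = (1/2)*(1/2)^n := by ring
              have h8 : (2:ℝ)^(n+1) = 2*2^n := by ring
              nlinarith [h5', h11]
          _ ≤ dist u (s 0) ^ 2 - dist u p ^ 2 := ih
    have h10 := main n
    have h12 : (0:ℝ) ≤ 2^n * (dist u (s n) ^ 2 - dist u p ^ 2) := by
      have := hb n; positivity
    rw [hs0] at h10
    linarith
  have hlim : Filter.Tendsto (fun n : ℕ => (1 - (1/2:ℝ)^n) * dist p z ^ 2)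
      Filter.atTop (nhds (dist p z ^ 2)) := by
    have h0 : Filter.Tendsto (fun n : ℕ => (1/2:ℝ)^n) Filter.atTop (nhds 0) := by
      apply tendsto_pow_atTop_nhds_zero_of_lt_one <;> norm_num
    have h := ((tendsto_const_nhds (x := (1:ℝ))).sub h0).mul
      (tendsto_const_nhds (x := dist p z ^ 2))
    simpa using h
  have := le_of_tendsto hlim (Filter.Eventually.of_forall key)
  linarith

/-- Quadrilateral inequality in CAT(0). -/
private lemma quad (hX : IsCAT0 W) (a b c d : X) :
    dist a c ^ 2 + dist b d ^ 2 ≤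
      dist a b ^ 2 + dist b c ^ 2 + dist c d ^ 2 + dist d a ^ 2 := by
  have h1 := hX.2 a c b
  have h2 := hX.2 a c d
  have h4 : dist b d ^ 2 ≤ 2 * dist b (W a c (1/2)) ^ 2 + 2 * dist d (W a c (1/2)) ^ 2 := by
    have h3 := dist_triangle b (W a c (1/2)) d
    have h3' := mul_self_le_mul_self (dist_nonneg (x:=b) (y:=d)) h3
    have hc : dist (W a c (1/2)) d = dist d (W a c (1/2)) := dist_comm _ _
    rw [hc] at h3'
    nlinarith [sq_nonneg (dist b (W a c (1/2)) - dist d (W a c (1/2)))]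
  have e1 : dist b a ^ 2 = dist a b ^ 2 := by rw [dist_comm]
  have e2 : dist d c ^ 2 = dist c d ^ 2 := by rw [dist_comm]
  have e3 : dist d a ^ 2 = dist a d ^ 2 := by rw [dist_comm]
  linarith [h1, h2, h4, e1, e2, e3]

end Aux

theorem stmt12 {X : Type*} [MetricSpace X] (W : X → X → ℝ → X)
    (hX : IsCAT0 W) (C : Set X) (hne : C.Nonempty) (hcl : IsClosed C)
    (hconv : IsWConvex W C) (P : X → X)
    (hP : ∀ x : X, P x ∈ C ∧ ∀ y ∈ C, dist x (P x) ≤ dist x y) :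
    ∀ x y : X, ∀ l ∈ Set.Ioo (0:ℝ) 1,
      dist (P x) (P y) ≤ dist (W x (P x) l) (W y (P y) l) := by
  intro x y l hl
  have hlI : l ∈ Set.Icc (0:ℝ) 1 := ⟨hl.1.le, hl.2.le⟩
  set p := P x
  set q := P y
  set u := W x p l with hu
  set v := W y q l with hv
  have hpC : p ∈ C := (hP x).1
  have hqC : q ∈ C := (hP y).1
  -- p is a nearest point of u in C
  have hmin : ∀ (w z : X), z ∈ C → (∀ c ∈ C, dist w z ≤ dist w c) →
      ∀ c ∈ C, dist (W w z l) z ≤ dist (W w z l) c := by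
    intro w z hzC hwz c hc
    have h1 : dist z (W w z l) = (1 - l) * dist w z := dist_W_right hX.1 w z hlI
    have h2 : dist w (W w z l) = l * dist w z := dist_W_left hX.1 w z hlI
    have h3 : dist w c ≤ dist w (W w z l) + dist (W w z l) c := dist_triangle _ _ _
    have h4 := hwz c hc
    rw [dist_comm]
    linarith
  have hminu := hmin x p hpC (hP x).2
  have hminv := hmin y q hqC (hP y).2
  have hA : dist u p ^ 2 + dist p q ^ 2 ≤ dist u q ^ 2 :=
    proj_char hX hconv hpC hminu hqC
  have hB : dist v q ^ 2 + dist q p ^ 2 ≤ dist v p ^ 2 :=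
    proj_char hX hconv hqC hminv hpC
  have hQ : dist u q ^ 2 + dist v p ^ 2 ≤
      dist u v ^ 2 + dist v q ^ 2 + dist q p ^ 2 + dist p u ^ 2 := quad hX u v q p
  have e1 : dist q p ^ 2 = dist p q ^ 2 := by rw [dist_comm]
  have e2 : dist p u ^ 2 = dist u p ^ 2 := by rw [dist_comm]
  have hsq : dist p q ^ 2 ≤ dist u v ^ 2 := by linarith
  nlinarith [dist_nonneg (x := p) (y := q), dist_nonneg (x := u) (y := v), hsq]
end

section
/- Let C be a nonempty closed convex subset of a complete Busemann space X, T:C→C nonexpansive and t ∈ (0,1). For each x ∈ C let U_t(x) be the unique fixed point of the contraction y ↦ (1-t)x ⊕ tT(y). Then U_t: C → C is firmly nonexpansive and Fix(U_t) = Fix(T). -/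
open Metric Set

section Aux
variable {X : Type*} [MetricSpace X] {W : X → X → ℝ → X}

lemma wEndpoint0 (hW : IsWHyperbolic W) (x y : X) : W x y 0 = x := by
  have h := hW.1 x y x 0 ⟨le_refl 0, zero_le_one⟩
  simp at h
  exact h.symm

lemma wEndpoint1 (hW : IsWHyperbolic W) (x y : X) : W x y 1 = y := by
  have h := hW.1 x y y 1 ⟨zero_le_one, le_refl 1⟩
  simp at h
  exact h.symm

lemma wHead (hBus : IsBusemann X) (hW : IsWHyperbolic W) (x y : X) {s l : ℝ}
    (hs : s ∈ Set.Icc (0:ℝ) 1) (hl : l ∈ Set.Icc (0:ℝ) 1) :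
    W x (W x y s) l = W x y (l * s) := by
  set z := W x y s with hz
  have hγ : AffinelyReparamGeodesic (fun a => W x z a) 0 1 :=
    ⟨dist x z, dist_nonneg, fun a ha b hb => by
      rw [hW.2.1 x z a ha b hb]; ring⟩
  have hγ' : AffinelyReparamGeodesic (fun a => W x y a) 0 1 :=
    ⟨dist x y, dist_nonneg, fun a ha b hb => by
      rw [hW.2.1 x y a ha b hb]; ring⟩
  have hm1 : ((0:ℝ),(0:ℝ)) ∈ Set.Icc (0:ℝ) 1 ×ˢ Set.Icc (0:ℝ) 1 := by
    simp [Set.mem_prod]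
  have hm2 : ((1:ℝ), s) ∈ Set.Icc (0:ℝ) 1 ×ˢ Set.Icc (0:ℝ) 1 := by
    exact Set.mem_prod.mpr ⟨⟨zero_le_one, le_refl 1⟩, hs⟩
  have ha1 : (0:ℝ) ≤ 1 - l := by linarith [hl.2]
  have hc := (hBus.2 _ _ 0 1 0 1 hγ hγ').2 hm1 hm2 ha1 hl.1 (by ring)
  simp only [Prod.smul_mk, smul_eq_mul, Prod.mk_add_mk] at hc
  rw [show (1-l)*0+l*1 = l by ring, show (1-l)*0+l*s = l*s by ring,
    wEndpoint0 hW, wEndpoint0 hW, wEndpoint1 hW, ← hz] at hc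
  simp only [dist_self, mul_zero, add_zero] at hc
  exact dist_le_zero.mp hc

lemma wTail (hBus : IsBusemann X) (hW : IsWHyperbolic W) (x y : X) {a μ : ℝ}
    (ha : a ∈ Set.Icc (0:ℝ) 1) (hμ : μ ∈ Set.Icc (0:ℝ) 1) :
    W (W x y a) y μ = W x y (a + μ * (1 - a)) := by
  have h1 : W (W x y a) y μ = W y (W x y a) (1 - μ) := hW.2.2.1 _ y μ hμ
  have h2 : W x y a = W y x (1 - a) := hW.2.2.1 x y a ha
  have h3 : W y (W y x (1 - a)) (1 - μ) = W y x ((1 - μ) * (1 - a)) :=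
    wHead hBus hW y x ⟨by linarith [ha.2], by linarith [ha.1]⟩
      ⟨by linarith [hμ.2], by linarith [hμ.1]⟩
  have h4 : W y x ((1 - μ) * (1 - a)) = W x y (1 - (1 - μ) * (1 - a)) := by
    rw [hW.2.2.1 y x ((1-μ)*(1-a))
      ⟨mul_nonneg (by linarith [hμ.2]) (by linarith [ha.2]),
       by nlinarith [hμ.1, ha.1, hμ.2, ha.2]⟩]
  rw [h1, h2, h3, h4]
  ring_nf

end Aux

theorem stmt13 {X : Type*} [MetricSpace X] [CompleteSpace X]
    (hBus : IsBusemann X) (W : X → X → ℝ → X) (hW : IsWHyperbolic W)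
    (C : Set X) (hne : C.Nonempty) (hcl : IsClosed C) (hconv : IsWConvex W C)
    (T : X → X) (hTC : Set.MapsTo T C C)
    (hTne : ∀ x ∈ C, ∀ y ∈ C, dist (T x) (T y) ≤ dist x y)
    (t : ℝ) (ht : t ∈ Set.Ioo (0:ℝ) 1)
    (U : X → X)
    -- `U x` is the (unique) fixed point of the contraction `y ↦ (1-t)x ⊕ tT(y)`
    (hU : ∀ x ∈ C, U x ∈ C ∧ U x = W x (T (U x)) t ∧
      ∀ y ∈ C, y = W x (T y) t → y = U x) :
    (∀ l ∈ Set.Ioo (0:ℝ) 1, ∀ x ∈ C, ∀ y ∈ C,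
      dist (U x) (U y) ≤ dist (W x (U x) l) (W y (U y) l)) ∧
    (∀ x ∈ C, U x = x ↔ T x = x) := by
  obtain ⟨ht0, ht1⟩ := ht
  constructor
  · intro l hl x hx y hy
    obtain ⟨huC, hu, -⟩ := hU x hx
    obtain ⟨hvC, hv, -⟩ := hU y hy
    have hlm : l ∈ Set.Icc (0:ℝ) 1 := ⟨hl.1.le, hl.2.le⟩
    have htm : t ∈ Set.Icc (0:ℝ) 1 := ⟨ht0.le, ht1.le⟩
    have hden : 0 < 1 - l * t := by nlinarith [hl.1, hl.2]
    have hlt : l * t ∈ Set.Icc (0:ℝ) 1 := ⟨mul_nonneg hl.1.le ht0.le, by nlinarith [hl.1, hl.2]⟩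
    set s := t * (1 - l) / (1 - l * t) with hsdef
    have hs0 : 0 ≤ s := div_nonneg (by nlinarith [hl.2]) hden.le
    have hs1 : s ≤ 1 := by rw [div_le_one hden]; nlinarith [hl.1]
    have hslt : s < 1 := by rw [div_lt_one hden]; nlinarith [hl.1]
    have hsm : s ∈ Set.Icc (0:ℝ) 1 := ⟨hs0, hs1⟩
    have harith : l * t + s * (1 - l * t) = t := by
      rw [hsdef]; field_simp; ring
    have hp : W x (U x) l = W x (T (U x)) (l * t) := by
      conv_lhs => rw [hu]
      exact wHead hBus hW x (T (U x)) htm hlm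
    have hq : W y (U y) l = W y (T (U y)) (l * t) := by
      conv_lhs => rw [hv]
      exact wHead hBus hW y (T (U y)) htm hlm
    have hu' : W (W x (U x) l) (T (U x)) s = U x := by
      rw [hp, wTail hBus hW x (T (U x)) hlt hsm, harith, ← hu]
    have hv' : W (W y (U y) l) (T (U y)) s = U y := by
      rw [hq, wTail hBus hW y (T (U y)) hlt hsm, harith, ← hv]
    have key := hW.2.2.2 (W x (U x) l) (W y (U y) l) (T (U x)) (T (U y)) s hsm
    rw [hu', hv'] at key
    have hT := hTne (U x) huC (U y) hvC
    have h2 : (1 - s) * dist (U x) (U y) ≤ (1 - s) * dist (W x (U x) l) (W y (U y) l) := by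
      nlinarith [key, hT]
    exact le_of_mul_le_mul_left h2 (by linarith)
  · intro x hx
    obtain ⟨-, hu, huniq⟩ := hU x hx
    constructor
    · intro hfix
      rw [hfix] at hu
      have h1 : W x (T x) 1 = T x := wEndpoint1 hW _ _
      have hd := hW.2.1 x (T x) t ⟨ht0.le, ht1.le⟩ 1 ⟨zero_le_one, le_refl 1⟩
      rw [h1, ← hu, abs_of_nonpos (by linarith)] at hd
      have hz : dist x (T x) = 0 := by nlinarith [hd]
      exact (dist_eq_zero.mp hz).symm
    · intro hfix
      have hxfix : x = W x (T x) t := by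
        rw [hfix]
        have h := hW.1 x x x t ⟨ht0.le, ht1.le⟩
        simp at h
        exact h
      exact (huniq x hx hxfix).symm
end

section
/- Let C be a subset of a W-hyperbolic space X and T:C→C a λ-firmly nonexpansive mapping for some λ ∈ (0,1). Then for all x ∈ C and all k ≥ 1, lim_{n→∞} d(T^{n+1}x, T^n x) = (1/k) lim_{n→∞} d(T^{n+k}x, T^n x) = lim_{n→∞} d(T^n x, x)/n = r_C(T), where r_C(T) = inf{d(y,Ty) : y ∈ C} is the minimal displacement of T. -/
open Metric Set

/-!
Let `D_k(n) = d(T^{n+k}x, T^n x)`, nonincreasing in `n` with limit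
`L_k = asymptoticStep T x k`. The triangle inequality
gives `L_{k+1} ≤ L_k + L_1`, while firm nonexpansiveness, expanded with (W1), yields
`(1 + l) d(Tu, Tv) ≤ (1 - l) d(u, v) + l (d(Tu, v) + d(u, Tv))`; applied along the orbit this makes
`k ↦ L_k` convex. With `L_0 = 0` both force `L_k = k L_1`. The sequence `d(T^n x, x)` is
subadditive, so by Fekete's lemma `d(T^n x, x) / n` tends to some `ρ`. Then
`r_C(T) ≤ L_1 ≤ ρ ≤ r_C(T)`: the first because every `D_1(n)` is a displacement, the second
because `n L_1 = L_n ≤ d(T^n x, x)`, the third by comparing the orbit of `x` with that of any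
`y ∈ C`, whose `n`-th point lies within `n d(y, Ty)` of `y`.
-/

open Filter Topology Function

lemma eq_natCast_mul_of_le_add_of_two_mul_le {L : ℕ → ℝ} (h0 : L 0 = 0)
    (hsub : ∀ k, L (k + 1) ≤ L k + L 1) (hconv : ∀ k, 2 * L (k + 1) ≤ L (k + 2) + L k)
    (k : ℕ) : L k = k * L 1 := by
  have hsuper : ∀ k, L 1 + L k ≤ L (k + 1) := by
    intro k
    induction k with
    | zero => simp [h0]
    | succ k ih => linarith [hconv k]
  induction k with
  | zero => simp [h0]
  | succ k ih => push_cast; linarith [hsub k, hsuper k]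

section Nonexpansive

variable {X : Type*} [MetricSpace X] {C : Set X} {T : X → X} {x : X}

noncomputable def minDisplacement (T : X → X) (C : Set X) : ℝ :=
  sInf {d : ℝ | ∃ y ∈ C, d = dist y (T y)}

noncomputable def asymptoticStep (T : X → X) (x : X) (k : ℕ) : ℝ :=
  ⨅ n, dist (T^[n + k] x) (T^[n] x)

lemma asymptoticStep_zero : asymptoticStep T x 0 = 0 := by
  simp [asymptoticStep]

lemma asymptoticStep_le_dist (k : ℕ) : asymptoticStep T x k ≤ dist (T^[k] x) x := by
  simpa [asymptoticStep] using ciInf_le (f := fun n => dist (T^[n + k] x) (T^[n] x))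
    ⟨0, forall_mem_range.2 fun _ => dist_nonneg⟩ 0

lemma LipschitzOnWith.dist_iterate_le (hT : LipschitzOnWith 1 T C) (hTC : MapsTo T C C)
    (n : ℕ) {x y : X} (hx : x ∈ C) (hy : y ∈ C) : dist (T^[n] x) (T^[n] y) ≤ dist x y := by
  induction n generalizing x y with
  | zero => simp
  | succ n ih =>
    rw [iterate_succ_apply, iterate_succ_apply]
    exact (ih (hTC hx) (hTC hy)).trans (by simpa using hT.dist_le_mul x hx y hy)

lemma LipschitzOnWith.antitone_dist_iterate_add (hT : LipschitzOnWith 1 T C)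
    (hTC : MapsTo T C C) (hx : x ∈ C) (k : ℕ) :
    Antitone fun n => dist (T^[n + k] x) (T^[n] x) := by
  refine antitone_nat_of_succ_le fun n => ?_
  rw [add_right_comm, iterate_succ_apply', iterate_succ_apply']
  simpa using hT.dist_le_mul _ (hTC.iterate _ hx) _ (hTC.iterate n hx)

lemma LipschitzOnWith.tendsto_asymptoticStep (hT : LipschitzOnWith 1 T C)
    (hTC : MapsTo T C C) (hx : x ∈ C) (k : ℕ) :
    Tendsto (fun n => dist (T^[n + k] x) (T^[n] x)) atTop (𝓝 (asymptoticStep T x k)) :=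
  tendsto_atTop_ciInf (hT.antitone_dist_iterate_add hTC hx k)
    ⟨0, forall_mem_range.2 fun _ => dist_nonneg⟩

lemma LipschitzOnWith.asymptoticStep_succ_le (hT : LipschitzOnWith 1 T C)
    (hTC : MapsTo T C C) (hx : x ∈ C) (k : ℕ) :
    asymptoticStep T x (k + 1) ≤ asymptoticStep T x k + asymptoticStep T x 1 := by
  refine le_of_tendsto_of_tendsto' (hT.tendsto_asymptoticStep hTC hx (k + 1))
    (((hT.tendsto_asymptoticStep hTC hx k).comp (tendsto_add_atTop_nat 1)).add
      (hT.tendsto_asymptoticStep hTC hx 1)) fun n => ?_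
  rw [comp_apply, add_right_comm, ← add_assoc]
  exact dist_triangle _ _ _

lemma minDisplacement_le_asymptoticStep_one (hTC : MapsTo T C C) (hx : x ∈ C) :
    minDisplacement T C ≤ asymptoticStep T x 1 :=
  le_ciInf fun n => csInf_le ⟨0, fun _ ⟨_, _, hd⟩ => hd ▸ dist_nonneg⟩
    ⟨T^[n] x, hTC.iterate n hx, by rw [iterate_succ_apply', dist_comm]⟩

lemma LipschitzOnWith.subadditive_dist_iterate (hT : LipschitzOnWith 1 T C)
    (hTC : MapsTo T C C) (hx : x ∈ C) : Subadditive fun n => dist (T^[n] x) x := fun m n =>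
  calc dist (T^[m + n] x) x ≤ dist (T^[n] (T^[m] x)) (T^[n] x) + dist (T^[n] x) x := by
        rw [add_comm, iterate_add_apply]; exact dist_triangle _ _ _
    _ ≤ dist (T^[m] x) x + dist (T^[n] x) x := by
        gcongr; exact hT.dist_iterate_le hTC n (hTC.iterate m hx) hx

lemma LipschitzOnWith.exists_tendsto_dist_iterate_div (hT : LipschitzOnWith 1 T C)
    (hTC : MapsTo T C C) (hx : x ∈ C) :
    ∃ ρ, Tendsto (fun n : ℕ => dist (T^[n] x) x / n) atTop (𝓝 ρ) :=
  ⟨_, (hT.subadditive_dist_iterate hTC hx).tendsto_lim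
    ⟨0, forall_mem_range.2 fun _ => by positivity⟩⟩

lemma LipschitzOnWith.dist_iterate_self_le (hT : LipschitzOnWith 1 T C) (hTC : MapsTo T C C)
    {y : X} (hy : y ∈ C) (n : ℕ) : dist (T^[n] y) y ≤ n * dist (T y) y := by
  induction n with
  | zero => simp
  | succ n ih =>
    have hstep : dist (T^[n + 1] y) (T^[n] y) ≤ dist (T y) y := by
      rw [iterate_succ_apply]; exact hT.dist_iterate_le hTC n (hTC hy) hy
    push_cast
    linarith [dist_triangle (T^[n + 1] y) (T^[n] y) y]

lemma LipschitzOnWith.le_dist_of_tendsto_dist_iterate_div (hT : LipschitzOnWith 1 T C)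
    (hTC : MapsTo T C C) (hx : x ∈ C) {ρ : ℝ}
    (hρ : Tendsto (fun n : ℕ => dist (T^[n] x) x / n) atTop (𝓝 ρ)) {y : X} (hy : y ∈ C) :
    ρ ≤ dist (T y) y := by
  have hbound : ∀ᶠ n : ℕ in atTop, dist (T^[n] x) x / n ≤ 2 * dist x y / n + dist (T y) y := by
    filter_upwards [eventually_gt_atTop 0] with n hn
    have hn' : (0 : ℝ) < n := by exact_mod_cast hn
    rw [div_add' _ _ _ hn'.ne', div_le_div_iff_of_pos_right hn']
    calc dist (T^[n] x) x ≤ dist (T^[n] x) (T^[n] y) + dist (T^[n] y) y + dist y x :=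
          dist_triangle4 _ _ _ _
      _ ≤ dist x y + n * dist (T y) y + dist x y := by
          gcongr
          · exact hT.dist_iterate_le hTC n hx hy
          · exact hT.dist_iterate_self_le hTC hy n
          · exact (dist_comm _ _).le
      _ = 2 * dist x y + dist (T y) y * n := by ring
  have hlim : Tendsto (fun n : ℕ => 2 * dist x y / n + dist (T y) y) atTop
      (𝓝 (0 + dist (T y) y)) :=
    (tendsto_const_div_atTop_nhds_zero_nat _).add tendsto_const_nhds
  simpa using le_of_tendsto_of_tendsto hρ hlim hbound

lemma LipschitzOnWith.le_minDisplacement_of_tendsto_dist_iterate_div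
    (hT : LipschitzOnWith 1 T C) (hTC : MapsTo T C C) (hx : x ∈ C) {ρ : ℝ}
    (hρ : Tendsto (fun n : ℕ => dist (T^[n] x) x / n) atTop (𝓝 ρ)) :
    ρ ≤ minDisplacement T C :=
  le_csInf ⟨_, x, hx, rfl⟩ fun _ ⟨y, hy, hd⟩ =>
    hd ▸ dist_comm y (T y) ▸ hT.le_dist_of_tendsto_dist_iterate_div hTC hx hρ hy

end Nonexpansive

section FirmlyNonexpansive

variable {X : Type*} [MetricSpace X] {W : X → X → ℝ → X} {l : ℝ} {C : Set X} {T : X → X}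
  {x : X}

def IsFirmlyNonexpansiveOn (W : X → X → ℝ → X) (l : ℝ) (T : X → X) (C : Set X) : Prop :=
  ∀ x ∈ C, ∀ y ∈ C, dist (T x) (T y) ≤ dist (W x (T x) l) (W y (T y) l)

namespace IsFirmlyNonexpansiveOn

lemma lipschitzOnWith (hW : IsWHyperbolic W) (hl0 : 0 ≤ l) (hl1 : l < 1)
    (hT : IsFirmlyNonexpansiveOn W l T C) : LipschitzOnWith 1 T C :=
  LipschitzOnWith.mk_one fun x hx y hy => by
    -- (W4) gives `d(Tx, Ty) ≤ (1 - l) d(x, y) + l d(Tx, Ty)`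
    nlinarith [hT x hx y hy, hW.2.2.2 x y (T x) (T y) l ⟨hl0, hl1.le⟩]

lemma one_add_mul_dist_le (hW : IsWHyperbolic W) (hl0 : 0 ≤ l) (hl1 : l < 1)
    (hT : IsFirmlyNonexpansiveOn W l T C) {x y : X} (hx : x ∈ C) (hy : y ∈ C) :
    (1 + l) * dist (T x) (T y) ≤ (1 - l) * dist x y + l * (dist (T x) y + dist x (T y)) := by
  have hl : l ∈ Icc (0 : ℝ) 1 := ⟨hl0, hl1.le⟩
  have hWy : dist (W x (T x) l) y ≤ (1 - l) * dist x y + l * dist (T x) y := by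
    simpa only [dist_comm y] using hW.1 x (T x) y l hl
  have hWTy : dist (W x (T x) l) (T y) ≤ (1 - l) * dist x (T y) + l * dist (T x) (T y) := by
    simpa only [dist_comm (T y)] using hW.1 x (T x) (T y) l hl
  have hfirm : dist (T x) (T y) ≤ (1 - l) * dist (W x (T x) l) y + l * dist (W x (T x) l) (T y) :=
    (hT x hx y hy).trans (hW.1 y (T y) _ l hl)
  nlinarith [mul_le_mul_of_nonneg_left hWy (sub_nonneg.2 hl1.le),
    mul_le_mul_of_nonneg_left hWTy hl0]

lemma two_mul_asymptoticStep_succ_le (hW : IsWHyperbolic W) (hl : l ∈ Ioo (0 : ℝ) 1)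
    (hT : IsFirmlyNonexpansiveOn W l T C) (hTC : MapsTo T C C) (hx : x ∈ C) (k : ℕ) :
    2 * asymptoticStep T x (k + 1) ≤ asymptoticStep T x (k + 2) + asymptoticStep T x k := by
  have hlip := hT.lipschitzOnWith hW hl.1.le hl.2
  have hD := hlip.tendsto_asymptoticStep hTC hx
  have hD' (j : ℕ) := (hD j).comp (tendsto_add_atTop_nat 1)
  have hlim : (1 + l) * asymptoticStep T x (k + 1) ≤
      (1 - l) * asymptoticStep T x (k + 1) +
        l * (asymptoticStep T x (k + 2) + asymptoticStep T x k) := by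
    refine le_of_tendsto_of_tendsto' ((hD' (k + 1)).const_mul _)
      (((hD (k + 1)).const_mul _).add (((hD (k + 2)).add (hD' k)).const_mul l)) fun n => ?_
    -- the key inequality at `T^[n + k + 1] x` and `T^[n] x`, up to reindexing
    have hkey := hT.one_add_mul_dist_le hW hl.1.le hl.2 (hTC.iterate (n + (k + 1)) hx)
      (hTC.iterate n hx)
    simp only [← iterate_succ_apply' T] at hkey
    simp only [comp_apply]
    convert hkey using 4 <;> congr 2 <;> omega
  nlinarith [hl.1]

lemma asymptoticStep_eq_mul (hW : IsWHyperbolic W) (hl : l ∈ Ioo (0 : ℝ) 1)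
    (hT : IsFirmlyNonexpansiveOn W l T C) (hTC : MapsTo T C C) (hx : x ∈ C) (k : ℕ) :
    asymptoticStep T x k = k * asymptoticStep T x 1 :=
  eq_natCast_mul_of_le_add_of_two_mul_le asymptoticStep_zero
    ((hT.lipschitzOnWith hW hl.1.le hl.2).asymptoticStep_succ_le hTC hx)
    (hT.two_mul_asymptoticStep_succ_le hW hl hTC hx) k

lemma asymptoticStep_one_le_of_tendsto_dist_iterate_div (hW : IsWHyperbolic W)
    (hl : l ∈ Ioo (0 : ℝ) 1) (hT : IsFirmlyNonexpansiveOn W l T C) (hTC : MapsTo T C C)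
    (hx : x ∈ C) {ρ : ℝ} (hρ : Tendsto (fun n : ℕ => dist (T^[n] x) x / n) atTop (𝓝 ρ)) :
    asymptoticStep T x 1 ≤ ρ := by
  refine ge_of_tendsto hρ ?_
  filter_upwards [eventually_gt_atTop 0] with n hn
  rw [le_div_iff₀ (by exact_mod_cast hn), mul_comm, ← hT.asymptoticStep_eq_mul hW hl hTC hx]
  exact asymptoticStep_le_dist n

end IsFirmlyNonexpansiveOn

end FirmlyNonexpansive

theorem stmt17_general {X : Type*} [MetricSpace X] (W : X → X → ℝ → X)
    (hW : IsWHyperbolic W) (C : Set X)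
    (T : X → X) (hTC : Set.MapsTo T C C)
    (l : ℝ) (hl : l ∈ Set.Ioo (0:ℝ) 1)
    (hT : ∀ x ∈ C, ∀ y ∈ C, dist (T x) (T y) ≤ dist (W x (T x) l) (W y (T y) l)) :
    -- `r` is the minimal displacement `r_C(T) = inf {d(y,Ty) : y ∈ C}`
    ∀ x ∈ C, ∀ k : ℕ, 1 ≤ k →
      Filter.Tendsto (fun n : ℕ => dist (T^[n + 1] x) (T^[n] x)) Filter.atTop
        (nhds (sInf {d : ℝ | ∃ y ∈ C, d = dist y (T y)})) ∧
      Filter.Tendsto (fun n : ℕ => (1 / (k : ℝ)) * dist (T^[n + k] x) (T^[n] x))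
        Filter.atTop (nhds (sInf {d : ℝ | ∃ y ∈ C, d = dist y (T y)})) ∧
      Filter.Tendsto (fun n : ℕ => dist (T^[n] x) x / (n : ℝ)) Filter.atTop
        (nhds (sInf {d : ℝ | ∃ y ∈ C, d = dist y (T y)})) := by
  intro x hx k hk
  have hfirm : IsFirmlyNonexpansiveOn W l T C := hT
  have hlip := hfirm.lipschitzOnWith hW hl.1.le hl.2
  obtain ⟨ρ, hρ⟩ := hlip.exists_tendsto_dist_iterate_div hTC hx
  have hρr := hlip.le_minDisplacement_of_tendsto_dist_iterate_div hTC hx hρ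
  have hrL := minDisplacement_le_asymptoticStep_one hTC hx
  have hLρ := hfirm.asymptoticStep_one_le_of_tendsto_dist_iterate_div hW hl hTC hx hρ
  have hL : asymptoticStep T x 1 = minDisplacement T C := by linarith
  have hLk : 1 / (k : ℝ) * asymptoticStep T x k = minDisplacement T C := by
    rw [hfirm.asymptoticStep_eq_mul hW hl hTC hx, ← hL]
    field_simp [Nat.cast_ne_zero.2 (by omega : k ≠ 0)]
  have hρ' : ρ = minDisplacement T C := by linarith
  refine ⟨?_, ?_, ?_⟩ <;> change Tendsto _ atTop (𝓝 (minDisplacement T C))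
  · exact hL ▸ hlip.tendsto_asymptoticStep hTC hx 1
  · exact hLk ▸ (hlip.tendsto_asymptoticStep hTC hx k).const_mul _
  · exact hρ' ▸ hρ

theorem stmt17 {X : Type*} [MetricSpace X] (W : X → X → ℝ → X)
    (hW : IsWHyperbolic W) (C : Set X) (hne : C.Nonempty)
    (T : X → X) (hTC : Set.MapsTo T C C)
    (l : ℝ) (hl : l ∈ Set.Ioo (0:ℝ) 1)
    (hT : ∀ x ∈ C, ∀ y ∈ C, dist (T x) (T y) ≤ dist (W x (T x) l) (W y (T y) l)) :
    -- `r` is the minimal displacement `r_C(T) = inf {d(y,Ty) : y ∈ C}`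
    ∀ x ∈ C, ∀ k : ℕ, 1 ≤ k →
      Filter.Tendsto (fun n : ℕ => dist (T^[n + 1] x) (T^[n] x)) Filter.atTop
        (nhds (sInf {d : ℝ | ∃ y ∈ C, d = dist y (T y)})) ∧
      Filter.Tendsto (fun n : ℕ => (1 / (k : ℝ)) * dist (T^[n + k] x) (T^[n] x))
        Filter.atTop (nhds (sInf {d : ℝ | ∃ y ∈ C, d = dist y (T y)})) ∧
      Filter.Tendsto (fun n : ℕ => dist (T^[n] x) x / (n : ℝ)) Filter.atTop
        (nhds (sInf {d : ℝ | ∃ y ∈ C, d = dist y (T y)})) :=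
  stmt17_general W hW C T hTC l hl hT
end
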